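/- Let $(\alpha,\beta)$ be a Bailey pair relative to $a$. Define $\alpha'_L = \frac{(\rho_1)_L(\rho_2)_L(aq/\rho_1\rho_2)^L}{(aq/\rho_1)_L(aq/\rho_2)_L}\alpha_L$ and $\beta'_L = \sum_{r=0}^L \frac{(\rho_1)_r(\rho_2)_r(aq/\rho_1\rho_2)^r (aq/\rho_1\rho_2)_{L-r}}{(aq/\rho_1)_L(aq/\rho_2)_L(q)_{L-r}}\beta_r$. Then $(\alpha',\beta')$ is again a Bailey pair relative to $a$. -/

import Mathlib

/-!
Substituting the Bailey pair relation for `β r` into `β' L` and exchanging the two sums, the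
coefficient of `α i` becomes a terminating balanced `₃φ₂`, which the q-Pfaff–Saalschütz
identity evaluates to exactly the coefficient required of `α' i`.

With `x = aq/(ρ₁ρ₂)` one has `aq/ρ₁ = xρ₂`, `aq/ρ₂ = xρ₁` and `aq = xρ₁ρ₂`, so all parameters
become monomials in `x, ρ₁, ρ₂`, and the shift `r = i + j` of the summation index only replaces
`ρ₁, ρ₂` by `ρ₁qⁱ, ρ₂qⁱ`. The Saalschütz sum itself is proved by creative telescoping: the sums
satisfy a first-order recurrence in `n`, because the defect of that recurrence has partial sums
in closed form.
-/

open Finset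

/-- The $q$-Pochhammer symbol $(x;q)_n$. -/
noncomputable def qp (q x : ℂ) (n : ℕ) : ℂ := ∏ k ∈ Finset.range n, (1 - x * q ^ k)

section QPochhammer

variable (q : ℂ)

lemma qp_zero (x : ℂ) : qp q x 0 = 1 := prod_range_zero _

lemma qp_succ (x : ℂ) (n : ℕ) : qp q x (n + 1) = qp q x n * (1 - x * q ^ n) :=
  prod_range_succ _ _

lemma qp_add (x : ℂ) (m n : ℕ) : qp q x (m + n) = qp q x m * qp q (x * q ^ m) n := by
  simp only [qp, prod_range_add, pow_add, mul_assoc]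

variable {q}

lemma one_sub_mul_pow_ne_zero {x : ℂ} (hx : ∀ n, qp q x n ≠ 0) (n : ℕ) : 1 - x * q ^ n ≠ 0 :=
  right_ne_zero_of_mul (qp_succ q x n ▸ hx (n + 1))

lemma qp_mul_pow_ne_zero {x : ℂ} (hx : ∀ n, qp q x n ≠ 0) (m n : ℕ) :
    qp q (x * q ^ m) n ≠ 0 :=
  right_ne_zero_of_mul (qp_add q x m n ▸ hx (m + n))

end QPochhammer

noncomputable def qpDivQq (q x : ℂ) (n : ℕ) : ℂ := qp q x n / qp q q n

noncomputable def saalschutzWeight (q x ρ₁ ρ₂ : ℂ) (j : ℕ) : ℂ :=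
  qp q ρ₁ j * qp q ρ₂ j * x ^ j / (qp q q j * qp q (x * ρ₁ * ρ₂) j)

noncomputable def saalschutzSum (q x ρ₁ ρ₂ : ℂ) (n : ℕ) : ℂ :=
  ∑ j ∈ range (n + 1), saalschutzWeight q x ρ₁ ρ₂ j * qpDivQq q x (n - j)

section Saalschutz

variable {q x ρ₁ ρ₂ : ℂ} (hq : ∀ n, qp q q n ≠ 0)
include hq

lemma qpDivQq_succ (n : ℕ) :
    qpDivQq q x (n + 1) * (1 - q * q ^ n) = qpDivQq q x n * (1 - x * q ^ n) := by
  simp only [qpDivQq, qp_succ]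
  rw [div_mul_eq_mul_div, div_mul_eq_mul_div,
    div_eq_div_iff (mul_ne_zero (hq n) (one_sub_mul_pow_ne_zero hq n)) (hq n)]
  ring

variable (hb : ∀ n, qp q (x * ρ₁ * ρ₂) n ≠ 0)
include hb

lemma saalschutzWeight_succ (j : ℕ) :
    saalschutzWeight q x ρ₁ ρ₂ (j + 1) * ((1 - q * q ^ j) * (1 - x * ρ₁ * ρ₂ * q ^ j)) =
      saalschutzWeight q x ρ₁ ρ₂ j * ((1 - ρ₁ * q ^ j) * (1 - ρ₂ * q ^ j) * x) := by
  have hden : qp q q j * qp q (x * ρ₁ * ρ₂) j ≠ 0 := mul_ne_zero (hq j) (hb j)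
  have hden' := mul_ne_zero (mul_ne_zero (hq j) (one_sub_mul_pow_ne_zero hq j))
    (mul_ne_zero (hb j) (one_sub_mul_pow_ne_zero hb j))
  simp only [saalschutzWeight, qp_succ, pow_succ]
  rw [div_mul_eq_mul_div, div_mul_eq_mul_div, div_eq_div_iff hden' hden]
  ring

/- The right-hand side is the WZ certificate of the recurrence `saalschutzSum_succ`. -/
lemma sum_saalschutzWeight_mul_sub (n : ℕ) : ∀ m ≤ n,
    ∑ j ∈ range (m + 1), saalschutzWeight q x ρ₁ ρ₂ j *
      ((1 - q * q ^ n) * (1 - x * ρ₁ * ρ₂ * q ^ n) * qpDivQq q x (n + 1 - j) -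
        (1 - x * ρ₁ * q ^ n) * (1 - x * ρ₂ * q ^ n) * qpDivQq q x (n - j)) =
    -(q ^ (n - m) * x * (1 - ρ₁ * q ^ m) * (1 - ρ₂ * q ^ m) *
      saalschutzWeight q x ρ₁ ρ₂ m * qpDivQq q x (n - m)) := by
  intro m
  induction m with
  | zero =>
    intro _
    simp only [zero_add, sum_range_one, Nat.sub_zero, saalschutzWeight, qp_zero, pow_zero]
    linear_combination (1 - x * ρ₁ * ρ₂ * q ^ n) * qpDivQq_succ hq n
  | succ m ih =>
    intro hmn
    obtain ⟨p, rfl⟩ : ∃ p, n = m + 1 + p := ⟨n - (m + 1), by omega⟩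
    rw [sum_range_succ, ih (by omega), show m + 1 + p - m = p + 1 by omega,
      show m + 1 + p + 1 - (m + 1) = p + 1 by omega, show m + 1 + p - (m + 1) = p by omega]
    linear_combination (q * q ^ p * qpDivQq q x (p + 1)) * saalschutzWeight_succ hq hb m +
      (saalschutzWeight q x ρ₁ ρ₂ (m + 1) * (1 - x * ρ₁ * ρ₂ * q ^ 2 * (q ^ m) ^ 2 * q ^ p)) *
        qpDivQq_succ hq p

lemma saalschutzSum_succ (n : ℕ) :
    (1 - q * q ^ n) * (1 - x * ρ₁ * ρ₂ * q ^ n) * saalschutzSum q x ρ₁ ρ₂ (n + 1) =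
      (1 - x * ρ₁ * q ^ n) * (1 - x * ρ₂ * q ^ n) * saalschutzSum q x ρ₁ ρ₂ n := by
  have partial_sums := sum_saalschutzWeight_mul_sub hq hb n n le_rfl
  have defect_eq_sum : (1 - q * q ^ n) * (1 - x * ρ₁ * ρ₂ * q ^ n) *
        ∑ j ∈ range (n + 1), saalschutzWeight q x ρ₁ ρ₂ j * qpDivQq q x (n + 1 - j) -
      (1 - x * ρ₁ * q ^ n) * (1 - x * ρ₂ * q ^ n) * saalschutzSum q x ρ₁ ρ₂ n =
      ∑ j ∈ range (n + 1), saalschutzWeight q x ρ₁ ρ₂ j *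
        ((1 - q * q ^ n) * (1 - x * ρ₁ * ρ₂ * q ^ n) * qpDivQq q x (n + 1 - j) -
          (1 - x * ρ₁ * q ^ n) * (1 - x * ρ₂ * q ^ n) * qpDivQq q x (n - j)) := by
    rw [saalschutzSum, mul_sum, mul_sum, ← sum_sub_distrib]
    exact sum_congr rfl fun j _ ↦ by ring
  have hV : qpDivQq q x 0 = 1 := by simp [qpDivQq, qp_zero]
  rw [Nat.sub_self, pow_zero, hV] at partial_sums
  rw [saalschutzSum, sum_range_succ _ (n + 1), Nat.sub_self, hV]
  linear_combination defect_eq_sum + partial_sums + saalschutzWeight_succ hq hb n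

theorem saalschutzSum_eq (n : ℕ) :
    saalschutzSum q x ρ₁ ρ₂ n =
      qp q (x * ρ₁) n * qp q (x * ρ₂) n / (qp q q n * qp q (x * ρ₁ * ρ₂) n) := by
  induction n with
  | zero => simp [saalschutzSum, saalschutzWeight, qpDivQq, qp_zero]
  | succ n ih =>
    refine mul_left_cancel₀
      (mul_ne_zero (one_sub_mul_pow_ne_zero hq n) (one_sub_mul_pow_ne_zero hb n)) ?_
    rw [saalschutzSum_succ hq hb n, ih, qp_succ, qp_succ, qp_succ, qp_succ,
      mul_div_assoc', mul_div_assoc', div_eq_div_iff (mul_ne_zero (hq n) (hb n))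
        (mul_ne_zero (mul_ne_zero (hq n) (one_sub_mul_pow_ne_zero hq n))
          (mul_ne_zero (hb n) (one_sub_mul_pow_ne_zero hb n)))]
    ring

theorem sum_shifted_saalschutz (i n : ℕ) (h₁ : qp q (x * ρ₁) i ≠ 0) (h₂ : qp q (x * ρ₂) i ≠ 0) :
    ∑ j ∈ range (n + 1), qp q ρ₁ (i + j) * qp q ρ₂ (i + j) * x ^ (i + j) * qp q x (n - j) /
        (qp q q (n - j) * qp q q j * qp q (x * ρ₁ * ρ₂) (2 * i + j)) =
      qp q ρ₁ i * qp q ρ₂ i * x ^ i * qp q (x * ρ₁) (i + n) * qp q (x * ρ₂) (i + n) /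
        (qp q (x * ρ₁) i * qp q (x * ρ₂) i * qp q q n * qp q (x * ρ₁ * ρ₂) (2 * i + n)) := by
  have hshift : x * (ρ₁ * q ^ i) * (ρ₂ * q ^ i) = x * ρ₁ * ρ₂ * q ^ (2 * i) := by ring
  have hb' : ∀ n, qp q (x * (ρ₁ * q ^ i) * (ρ₂ * q ^ i)) n ≠ 0 :=
    hshift ▸ qp_mul_pow_ne_zero hb (2 * i)
  have hterm : ∀ j ∈ range (n + 1),
      qp q ρ₁ (i + j) * qp q ρ₂ (i + j) * x ^ (i + j) * qp q x (n - j) /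
        (qp q q (n - j) * qp q q j * qp q (x * ρ₁ * ρ₂) (2 * i + j)) =
      qp q ρ₁ i * qp q ρ₂ i * x ^ i / qp q (x * ρ₁ * ρ₂) (2 * i) *
        (saalschutzWeight q x (ρ₁ * q ^ i) (ρ₂ * q ^ i) j * qpDivQq q x (n - j)) := by
    intro j _
    rw [saalschutzWeight, qpDivQq, qp_add q ρ₁, qp_add q ρ₂, qp_add q (x * ρ₁ * ρ₂), hshift,
      pow_add, div_mul_div_comm, div_mul_div_comm, div_eq_div_iff]
    · ring
    · exact mul_ne_zero (mul_ne_zero (hq _) (hq _))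
        (mul_ne_zero (hb _) (qp_mul_pow_ne_zero hb _ j))
    · exact mul_ne_zero (hb _)
        (mul_ne_zero (mul_ne_zero (hq _) (qp_mul_pow_ne_zero hb _ j)) (hq _))
  rw [sum_congr rfl hterm, ← mul_sum, ← saalschutzSum, saalschutzSum_eq hq hb', hshift,
    ← mul_assoc x ρ₁, ← mul_assoc x ρ₂, qp_add q (x * ρ₁), qp_add q (x * ρ₂),
    qp_add q (x * ρ₁ * ρ₂), div_mul_div_comm, div_eq_div_iff]
  · ring
  · exact mul_ne_zero (hb _) (mul_ne_zero (hq n) (qp_mul_pow_ne_zero hb _ n))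
  · exact mul_ne_zero (mul_ne_zero (mul_ne_zero h₁ h₂) (hq n))
      (mul_ne_zero (hb _) (qp_mul_pow_ne_zero hb _ n))

end Saalschutz

def IsBaileyPair (q a : ℂ) (α β : ℕ → ℂ) : Prop :=
  ∀ L, β L = ∑ i ∈ range (L + 1), α i / (qp q q (L - i) * qp q (a * q) (L + i))

theorem IsBaileyPair.bailey_lemma {q a x ρ₁ ρ₂ : ℂ} {α β : ℕ → ℂ} (h : IsBaileyPair q a α β)
    (hx : x * ρ₁ * ρ₂ = a * q) (hq : ∀ n, qp q q n ≠ 0) (haq : ∀ n, qp q (a * q) n ≠ 0)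
    (h₁ : ∀ n, qp q (x * ρ₁) n ≠ 0) (h₂ : ∀ n, qp q (x * ρ₂) n ≠ 0) :
    IsBaileyPair q a
      (fun L ↦ qp q ρ₁ L * qp q ρ₂ L * x ^ L / (qp q (x * ρ₂) L * qp q (x * ρ₁) L) * α L)
      (fun L ↦ ∑ r ∈ range (L + 1), qp q ρ₁ r * qp q ρ₂ r * x ^ r * qp q x (L - r) /
        (qp q (x * ρ₂) L * qp q (x * ρ₁) L * qp q q (L - r)) * β r) := by
  rw [← hx] at haq
  simp only [IsBaileyPair, ← hx] at h ⊢
  intro L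
  calc ∑ r ∈ range (L + 1), qp q ρ₁ r * qp q ρ₂ r * x ^ r * qp q x (L - r) /
        (qp q (x * ρ₂) L * qp q (x * ρ₁) L * qp q q (L - r)) * β r
      = ∑ r ∈ range (L + 1), ∑ i ∈ range (r + 1), qp q ρ₁ r * qp q ρ₂ r * x ^ r * qp q x (L - r) /
          (qp q (x * ρ₂) L * qp q (x * ρ₁) L * qp q q (L - r)) *
          (α i / (qp q q (r - i) * qp q (x * ρ₁ * ρ₂) (r + i))) :=
        sum_congr rfl fun r _ ↦ by rw [h r, mul_sum]
    _ = ∑ i ∈ range (L + 1), ∑ r ∈ Ico i (L + 1), qp q ρ₁ r * qp q ρ₂ r * x ^ r * qp q x (L - r) /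
          (qp q (x * ρ₂) L * qp q (x * ρ₁) L * qp q q (L - r)) *
          (α i / (qp q q (r - i) * qp q (x * ρ₁ * ρ₂) (r + i))) := by
        simp only [range_eq_Ico]
        exact (sum_Ico_Ico_comm 0 (L + 1) fun i r ↦ _).symm
    _ = _ := sum_congr rfl fun i hi ↦ ?_
  obtain ⟨n, rfl⟩ : ∃ n, L = i + n := ⟨L - i, (Nat.add_sub_of_le (mem_range_succ_iff.mp hi)).symm⟩
  rw [sum_Ico_eq_sum_range, show i + n + 1 - i = n + 1 by omega]
  have hterm : ∀ j ∈ range (n + 1),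
      qp q ρ₁ (i + j) * qp q ρ₂ (i + j) * x ^ (i + j) * qp q x (i + n - (i + j)) /
          (qp q (x * ρ₂) (i + n) * qp q (x * ρ₁) (i + n) * qp q q (i + n - (i + j))) *
          (α i / (qp q q (i + j - i) * qp q (x * ρ₁ * ρ₂) (i + j + i))) =
        α i / (qp q (x * ρ₂) (i + n) * qp q (x * ρ₁) (i + n)) *
          (qp q ρ₁ (i + j) * qp q ρ₂ (i + j) * x ^ (i + j) * qp q x (n - j) /
            (qp q q (n - j) * qp q q j * qp q (x * ρ₁ * ρ₂) (2 * i + j))) := by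
    intro j _
    rw [show i + n - (i + j) = n - j by omega, show i + j - i = j by omega,
      show i + j + i = 2 * i + j by omega]
    ring
  rw [sum_congr rfl hterm, ← mul_sum, sum_shifted_saalschutz hq haq i n (h₁ i) (h₂ i),
    show i + n + i = 2 * i + n by omega, Nat.add_sub_cancel_left, div_mul_div_comm,
    div_mul_eq_mul_div, div_div, div_eq_div_iff]
  · ring
  all_goals simp [h₁, h₂, hq, haq]

/-- One step of the Bailey chain: if $(\alpha,\beta)$ is a Bailey pair relative
to $a$, then so is $(\alpha',\beta')$ with
$\alpha'_L = \frac{(\rho_1)_L(\rho_2)_L(aq/\rho_1\rho_2)^L}{(aq/\rho_1)_L(aq/\rho_2)_L}\alpha_L$ and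
$\beta'_L = \sum_{r=0}^{L}\frac{(\rho_1)_r(\rho_2)_r(aq/\rho_1\rho_2)^r(aq/\rho_1\rho_2)_{L-r}}
{(aq/\rho_1)_L(aq/\rho_2)_L(q)_{L-r}}\beta_r$. -/
theorem bailey_chain_step (q a ρ₁ ρ₂ : ℂ)
    (hq0 : ∀ n : ℕ, qp q q n ≠ 0)
    (haq : ∀ n : ℕ, qp q (a * q) n ≠ 0)
    (hρ₁ : ρ₁ ≠ 0) (hρ₂ : ρ₂ ≠ 0)
    (h₁ : ∀ n : ℕ, qp q (a * q / ρ₁) n ≠ 0)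
    (h₂ : ∀ n : ℕ, qp q (a * q / ρ₂) n ≠ 0)
    (α β α' β' : ℕ → ℂ)
    (hBP : ∀ L, β L = ∑ i ∈ Finset.range (L + 1),
      α i / (qp q q (L - i) * qp q (a * q) (L + i)))
    (hα' : ∀ L, α' L =
      qp q ρ₁ L * qp q ρ₂ L * (a * q / (ρ₁ * ρ₂)) ^ L /
        (qp q (a * q / ρ₁) L * qp q (a * q / ρ₂) L) * α L)
    (hβ' : ∀ L, β' L = ∑ r ∈ Finset.range (L + 1),
      qp q ρ₁ r * qp q ρ₂ r * (a * q / (ρ₁ * ρ₂)) ^ r * qp q (a * q / (ρ₁ * ρ₂)) (L - r) /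
        (qp q (a * q / ρ₁) L * qp q (a * q / ρ₂) L * qp q q (L - r)) * β r) :
    ∀ L, β' L = ∑ i ∈ Finset.range (L + 1),
      α' i / (qp q q (L - i) * qp q (a * q) (L + i)) := by
  have hx : a * q / (ρ₁ * ρ₂) * ρ₁ * ρ₂ = a * q := by field_simp
  have hx₁ : a * q / (ρ₁ * ρ₂) * ρ₁ = a * q / ρ₂ := by field_simp
  have hx₂ : a * q / (ρ₁ * ρ₂) * ρ₂ = a * q / ρ₁ := by field_simp
  have step := IsBaileyPair.bailey_lemma hBP hx hq0 haq (hx₁ ▸ h₂) (hx₂ ▸ h₁)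
  rw [hx₁, hx₂] at step
  obtain rfl : α' = _ := funext hα'
  obtain rfl : β' = _ := funext hβ'
  exact step
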